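/- Let η, η' ∈ [0, π/2]. The minimum Euclidean distance between the sets T_η = {(cos η · v₁ ; sin η · v₂) : v₁, v₂ ∈ S^{n-1}} and T_{η'} = {(cos η' · v₁ ; sin η' · v₂) : v₁, v₂ ∈ S^{n-1}} in R^{2n} equals 2·sin(|η − η'|/2). -/
import Mathlib


open Real

open scoped RealInnerProductSpace

noncomputable def concat {n : ℕ} (a b : EuclideanSpace ℝ (Fin n)) :
    WithLp 2 (EuclideanSpace ℝ (Fin n) × EuclideanSpace ℝ (Fin n)) :=
  (WithLp.equiv 2 (EuclideanSpace ℝ (Fin n) × EuclideanSpace ℝ (Fin n))).symm (a, b)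

lemma dist_concat {n : ℕ} (a b c d : EuclideanSpace ℝ (Fin n)) :
    dist (concat a b) (concat c d) = Real.sqrt (dist a c ^ 2 + dist b d ^ 2) := by
  rw [concat, concat, WithLp.prod_dist_eq_of_L2]; rfl

lemma dist_smul_ge {n : ℕ} (s t : ℝ) (hs : 0 ≤ s) (ht : 0 ≤ t)
    (u w : EuclideanSpace ℝ (Fin n)) (hu : ‖u‖ = 1) (hw : ‖w‖ = 1) :
    (s - t) ^ 2 ≤ dist (s • u) (t • w) ^ 2 := by
  rw [dist_eq_norm]
  have h := norm_sub_sq_real (s • u) (t • w)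
  have hin : ⟪s • u, t • w⟫ ≤ s * t := by
    rw [real_inner_smul_left, real_inner_smul_right]
    have h1 : ⟪u, w⟫ ≤ 1 := by
      have := real_inner_le_norm u w
      rwa [hu, hw, one_mul] at this
    nlinarith [mul_nonneg hs ht]
  have h2 : ‖s • u‖ = s := by rw [norm_smul, hu, mul_one, Real.norm_eq_abs, abs_of_nonneg hs]
  have h3 : ‖t • w‖ = t := by rw [norm_smul, hw, mul_one, Real.norm_eq_abs, abs_of_nonneg ht]
  rw [h2, h3] at h
  nlinarith

lemma sqrt_val (η η' : ℝ) (hη : η ∈ Set.Icc 0 (π / 2)) (hη' : η' ∈ Set.Icc 0 (π / 2)) :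
    Real.sqrt ((cos η - cos η') ^ 2 + (sin η - sin η') ^ 2) = 2 * sin (|η - η'| / 2) := by
  have habs : |η - η'| ≤ π / 2 := by
    rw [abs_sub_le_iff]
    constructor <;> nlinarith [hη.1, hη.2, hη'.1, hη'.2]
  have hpos : 0 ≤ sin (|η - η'| / 2) :=
    Real.sin_nonneg_of_nonneg_of_le_pi (by positivity)
      (by nlinarith [Real.pi_pos])
  have hsq : (2 * sin (|η - η'| / 2)) ^ 2 = 2 - 2 * cos (η - η') := by
    have h1 := Real.cos_two_mul (|η - η'| / 2)
    have h2 : 2 * (|η - η'| / 2) = |η - η'| := by ring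
    rw [h2] at h1
    have h3 : cos |η - η'| = cos (η - η') := Real.cos_abs _
    have h4 := Real.sin_sq_add_cos_sq (|η - η'| / 2)
    nlinarith
  have hlhs : (cos η - cos η') ^ 2 + (sin η - sin η') ^ 2 = 2 - 2 * cos (η - η') := by
    rw [Real.cos_sub]
    nlinarith [Real.sin_sq_add_cos_sq η, Real.sin_sq_add_cos_sq η']
  rw [hlhs, ← hsq, Real.sqrt_sq (by positivity)]

/-- The minimum distance between the leaves `T_η` and `T_{η'}` is `2 sin(|η - η'|/2)`. -/
theorem stmt1 (n : ℕ) (hn : 0 < n) (η η' : ℝ)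
    (hη : η ∈ Set.Icc 0 (π / 2)) (hη' : η' ∈ Set.Icc 0 (π / 2)) :
    sInf {r : ℝ | ∃ v₁ v₂ w₁ w₂ : EuclideanSpace ℝ (Fin n),
        ‖v₁‖ = 1 ∧ ‖v₂‖ = 1 ∧ ‖w₁‖ = 1 ∧ ‖w₂‖ = 1 ∧
        r = dist (concat (cos η • v₁) (sin η • v₂))
                 (concat (cos η' • w₁) (sin η' • w₂))}
      = 2 * sin (|η - η'| / 2) := by
  have hcos : 0 ≤ cos η := Real.cos_nonneg_of_mem_Icc
    ⟨by linarith [hη.1, Real.pi_pos], hη.2⟩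
  have hcos' : 0 ≤ cos η' := Real.cos_nonneg_of_mem_Icc
    ⟨by linarith [hη'.1, Real.pi_pos], hη'.2⟩
  have hsin : 0 ≤ sin η := Real.sin_nonneg_of_nonneg_of_le_pi hη.1
    (by linarith [hη.2, Real.pi_pos])
  have hsin' : 0 ≤ sin η' := Real.sin_nonneg_of_nonneg_of_le_pi hη'.1
    (by linarith [hη'.2, Real.pi_pos])
  set u : EuclideanSpace ℝ (Fin n) := EuclideanSpace.single ⟨0, hn⟩ 1 with hu_def
  have hu : ‖u‖ = 1 := by rw [hu_def, EuclideanSpace.norm_single, norm_one]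
  have hmem : (2 * sin (|η - η'| / 2)) ∈ {r : ℝ | ∃ v₁ v₂ w₁ w₂ : EuclideanSpace ℝ (Fin n),
        ‖v₁‖ = 1 ∧ ‖v₂‖ = 1 ∧ ‖w₁‖ = 1 ∧ ‖w₂‖ = 1 ∧
        r = dist (concat (cos η • v₁) (sin η • v₂))
                 (concat (cos η' • w₁) (sin η' • w₂))} := by
    refine ⟨u, u, u, u, hu, hu, hu, hu, ?_⟩
    rw [dist_concat]
    have hd1 : dist (cos η • u) (cos η' • u) = |cos η - cos η'| := by
      rw [dist_eq_norm, ← sub_smul, norm_smul, hu, mul_one, Real.norm_eq_abs]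
    have hd2 : dist (sin η • u) (sin η' • u) = |sin η - sin η'| := by
      rw [dist_eq_norm, ← sub_smul, norm_smul, hu, mul_one, Real.norm_eq_abs]
    rw [hd1, hd2, sq_abs, sq_abs, sqrt_val η η' hη hη']
  refine le_antisymm ?_ ?_
  · apply csInf_le ?_ hmem
    refine ⟨0, fun r hr => ?_⟩
    obtain ⟨v₁, v₂, w₁, w₂, _, _, _, _, hr⟩ := hr
    rw [hr]; exact dist_nonneg
  · apply le_csInf ⟨_, hmem⟩
    rintro r ⟨v₁, v₂, w₁, w₂, hv₁, hv₂, hw₁, hw₂, rfl⟩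
    rw [dist_concat, ← sqrt_val η η' hη hη']
    apply Real.sqrt_le_sqrt
    have h1 := dist_smul_ge (cos η) (cos η') hcos hcos' v₁ w₁ hv₁ hw₁
    have h2 := dist_smul_ge (sin η) (sin η') hsin hsin' v₂ w₂ hv₂ hw₂
    linarith
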